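/- arXiv:1411.1368 — 3 statements merged into one kernel-verified Lean document; each statement's English description precedes it below -/
import Mathlib

section
/- Let B_1, B_2 be the f_1- and f_2-belief operators of players 1 and 2, and for measurable events C_1, C_2 define iterated beliefs by D_i^1 := B_i(C_j) ∩ C_i and D_i^{n+1} := B_i(D_j^n) ∩ D_i^n (where j ≠ i), and D_i := ⋂_{n≥1} D_i^n. Then D_i ⊆ B_i(D_j) for each i; that is, P_i(D_j | ω) ≥ f_i(ω) for every ω ∈ D_i. -/
open MeasureTheory

/-- The `f`-belief operator `B(A) = {ω : P(A | ω) ≥ f(ω)}`. -/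
def fBelief {Ω : Type*} [MeasurableSpace Ω] (P : Ω → Measure Ω) (f : Ω → ℝ)
    (A : Set Ω) : Set Ω :=
  {ω | f ω ≤ (P ω A).toReal}

/-- The iterated `f`-belief sets: `iterD 0 = (C₁, C₂)`,
`(iterD (n+1)).i = Bᵢ((iterD n).j) ∩ (iterD n).i`; so `(iterD 1).i = Bᵢ(C_j) ∩ Cᵢ`. -/
def iterD {Ω : Type*} (B1 B2 : Set Ω → Set Ω) (C1 C2 : Set Ω) : ℕ → Set Ω × Set Ω
  | 0 => (C1, C2)
  | n + 1 =>
      (B1 (iterD B1 B2 C1 C2 n).2 ∩ (iterD B1 B2 C1 C2 n).1,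
       B2 (iterD B1 B2 C1 C2 n).1 ∩ (iterD B1 B2 C1 C2 n).2)

lemma iterD_swap {Ω : Type*} (B1 B2 : Set Ω → Set Ω) (C1 C2 : Set Ω) (n : ℕ) :
    (iterD B1 B2 C1 C2 n).2 = (iterD B2 B1 C2 C1 n).1 ∧
    (iterD B1 B2 C1 C2 n).1 = (iterD B2 B1 C2 C1 n).2 := by
  induction n with
  | zero => exact ⟨rfl, rfl⟩
  | succ n ih => simp [iterD, ih.1, ih.2]

lemma iterD_meas {Ω : Type*} [MeasurableSpace Ω]
    (P1 P2 : Ω → Measure Ω)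
    (hP1meas : ∀ A : Set Ω, MeasurableSet A → Measurable fun ω => (P1 ω A).toReal)
    (hP2meas : ∀ A : Set Ω, MeasurableSet A → Measurable fun ω => (P2 ω A).toReal)
    (f1 f2 : Ω → ℝ) (hf1 : Measurable f1) (hf2 : Measurable f2)
    (C1 C2 : Set Ω) (hC1 : MeasurableSet C1) (hC2 : MeasurableSet C2) (n : ℕ) :
    MeasurableSet (iterD (fBelief P1 f1) (fBelief P2 f2) C1 C2 n).1 ∧
    MeasurableSet (iterD (fBelief P1 f1) (fBelief P2 f2) C1 C2 n).2 := by
  induction n with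
  | zero => exact ⟨hC1, hC2⟩
  | succ n ih =>
    refine ⟨MeasurableSet.inter ?_ ih.1, MeasurableSet.inter ?_ ih.2⟩
    · exact measurableSet_le hf1 (hP1meas _ ih.2)
    · exact measurableSet_le hf2 (hP2meas _ ih.1)

lemma iterD_anti {Ω : Type*} (B1 B2 : Set Ω → Set Ω) (C1 C2 : Set Ω) (n : ℕ) :
    (iterD B1 B2 C1 C2 (n + 1)).1 ⊆ (iterD B1 B2 C1 C2 n).1 ∧
    (iterD B1 B2 C1 C2 (n + 1)).2 ⊆ (iterD B1 B2 C1 C2 n).2 :=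
  ⟨Set.inter_subset_right, Set.inter_subset_right⟩

lemma iterD_key {Ω : Type*} [MeasurableSpace Ω]
    (P1 P2 : Ω → Measure Ω)
    (hP1 : ∀ ω, IsProbabilityMeasure (P1 ω))
    (hP1meas : ∀ A : Set Ω, MeasurableSet A → Measurable fun ω => (P1 ω A).toReal)
    (hP2meas : ∀ A : Set Ω, MeasurableSet A → Measurable fun ω => (P2 ω A).toReal)
    (f1 f2 : Ω → ℝ) (hf1 : Measurable f1) (hf2 : Measurable f2)
    (C1 C2 : Set Ω) (hC1 : MeasurableSet C1) (hC2 : MeasurableSet C2) :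
    ∀ ω ∈ ⋂ n, (iterD (fBelief P1 f1) (fBelief P2 f2) C1 C2 (n + 1)).1,
        f1 ω ≤ (P1 ω (⋂ n, (iterD (fBelief P1 f1) (fBelief P2 f2) C1 C2 (n + 1)).2)).toReal := by
  intro ω hω
  set D : ℕ → Set Ω × Set Ω := iterD (fBelief P1 f1) (fBelief P2 f2) C1 C2 with hD
  have hmeas := iterD_meas P1 P2 hP1meas hP2meas f1 f2 hf1 hf2 C1 C2 hC1 hC2
  have hanti : Antitone (fun n => (D (n + 1)).2) :=
    antitone_nat_of_succ_le fun n => (iterD_anti _ _ _ _ (n + 1)).2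
  have := hP1 ω
  have htend : Filter.Tendsto (fun n => P1 ω ((D (n + 1)).2)) Filter.atTop
      (nhds (P1 ω (⋂ n, (D (n + 1)).2))) := by
    refine tendsto_measure_iInter_atTop (fun n => ((hmeas (n + 1)).2).nullMeasurableSet)
      hanti ⟨0, ?_⟩
    exact (measure_lt_top _ _).ne
  have htendR : Filter.Tendsto (fun n => (P1 ω ((D (n + 1)).2)).toReal) Filter.atTop
      (nhds ((P1 ω (⋂ n, (D (n + 1)).2)).toReal)) :=
    (ENNReal.tendsto_toReal (measure_ne_top _ _)).comp htend
  refine ge_of_tendsto htendR (Filter.Eventually.of_forall fun n => ?_)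
  have hω2 : ω ∈ (D (n + 2)).1 := Set.mem_iInter.mp hω (n + 1)
  exact hω2.1

/-- For the iterated `f`-belief limit sets `Dᵢ = ⋂_{n ≥ 1} Dᵢⁿ`, each player `fᵢ`-believes
in the other's set: `P_i(D_j | ω) ≥ f_i(ω)` for every `ω ∈ D_i`. -/
theorem iterated_fBelief_mutual {Ω : Type*} [MeasurableSpace Ω]
    (P1 P2 : Ω → Measure Ω)
    (hP1 : ∀ ω, IsProbabilityMeasure (P1 ω)) (hP2 : ∀ ω, IsProbabilityMeasure (P2 ω))
    (hP1meas : ∀ A : Set Ω, MeasurableSet A → Measurable fun ω => (P1 ω A).toReal)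
    (hP2meas : ∀ A : Set Ω, MeasurableSet A → Measurable fun ω => (P2 ω A).toReal)
    (f1 f2 : Ω → ℝ) (hf1 : Measurable f1) (hf2 : Measurable f2)
    (C1 C2 : Set Ω) (hC1 : MeasurableSet C1) (hC2 : MeasurableSet C2) :
    (∀ ω ∈ ⋂ n, (iterD (fBelief P1 f1) (fBelief P2 f2) C1 C2 (n + 1)).1,
        f1 ω ≤ (P1 ω (⋂ n, (iterD (fBelief P1 f1) (fBelief P2 f2) C1 C2 (n + 1)).2)).toReal) ∧
    (∀ ω ∈ ⋂ n, (iterD (fBelief P1 f1) (fBelief P2 f2) C1 C2 (n + 1)).2,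
        f2 ω ≤ (P2 ω (⋂ n, (iterD (fBelief P1 f1) (fBelief P2 f2) C1 C2 (n + 1)).1)).toReal) := by
  constructor
  · exact iterD_key P1 P2 hP1 hP1meas hP2meas f1 f2 hf1 hf2 C1 C2 hC1 hC2
  · have key := iterD_key P2 P1 hP2 hP2meas hP1meas f2 f1 hf2 hf1 C2 C1 hC2 hC1
    intro ω hω
    have e1 : ∀ n, (iterD (fBelief P1 f1) (fBelief P2 f2) C1 C2 n).2
        = (iterD (fBelief P2 f2) (fBelief P1 f1) C2 C1 n).1 := fun n =>
      (iterD_swap _ _ _ _ n).1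
    have e2 : ∀ n, (iterD (fBelief P1 f1) (fBelief P2 f2) C1 C2 n).1
        = (iterD (fBelief P2 f2) (fBelief P1 f1) C2 C1 n).2 := fun n =>
      (iterD_swap _ _ _ _ n).2
    simp only [e1, e2] at hω ⊢
    exact key ω hω
end

section
/- With notation as above, the pair (D_1, D_2) = (D_1^f(C_1,C_2), D_2^f(C_2,C_1)) is the largest pair of subsets of (C_1, C_2) satisfying the mutual belief property: if K_1 ⊆ C_1 and K_2 ⊆ C_2 satisfy P_i(K_j | ω) ≥ f_i(ω) for each i and every ω ∈ K_i, then K_i ⊆ D_i for i = 1, 2. -/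
open MeasureTheory

lemma fBelief_mono {Ω : Type*} [MeasurableSpace Ω] (P : Ω → Measure Ω)
    (hP : ∀ ω, IsProbabilityMeasure (P ω)) (f : Ω → ℝ) {A B : Set Ω} (h : A ⊆ B) :
    fBelief P f A ⊆ fBelief P f B := by
  intro ω hω
  refine le_trans hω (ENNReal.toReal_mono ?_ (measure_mono h))
  exact (measure_ne_top (P ω) B)

/-- Maximality of the iterated `f`-belief sets: any pair `(K₁, K₂)` of subsets of
`(C₁, C₂)` with the mutual belief property `P_i(K_j | ω) ≥ f_i(ω)` on `K_i` satisfies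
`K_i ⊆ D_i^f(C_i, C_j)`. -/
theorem iterated_fBelief_maximal {Ω : Type*} [MeasurableSpace Ω]
    (P1 P2 : Ω → Measure Ω)
    (hP1 : ∀ ω, IsProbabilityMeasure (P1 ω)) (hP2 : ∀ ω, IsProbabilityMeasure (P2 ω))
    (f1 f2 : Ω → ℝ) (C1 C2 : Set Ω) (K1 K2 : Set Ω)
    (hK1 : K1 ⊆ C1) (hK2 : K2 ⊆ C2)
    (h1 : ∀ ω ∈ K1, f1 ω ≤ (P1 ω K2).toReal)
    (h2 : ∀ ω ∈ K2, f2 ω ≤ (P2 ω K1).toReal) :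
    K1 ⊆ ⋂ n, (iterD (fBelief P1 f1) (fBelief P2 f2) C1 C2 (n + 1)).1 ∧
    K2 ⊆ ⋂ n, (iterD (fBelief P1 f1) (fBelief P2 f2) C1 C2 (n + 1)).2 := by
  have key : ∀ n, K1 ⊆ (iterD (fBelief P1 f1) (fBelief P2 f2) C1 C2 n).1 ∧
      K2 ⊆ (iterD (fBelief P1 f1) (fBelief P2 f2) C1 C2 n).2 := by
    intro n
    induction n with
    | zero => exact ⟨hK1, hK2⟩
    | succ n ih =>
      constructor
      · intro ω hω
        exact ⟨fBelief_mono P1 hP1 f1 ih.2 (h1 ω hω), ih.1 hω⟩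
      · intro ω hω
        exact ⟨fBelief_mono P2 hP2 f2 ih.1 (h2 ω hω), ih.2 hω⟩
  exact ⟨Set.subset_iInter fun n => (key (n+1)).1, Set.subset_iInter fun n => (key (n+1)).2⟩
end

section
/- In the complete-information repeated Prisoner's Dilemma (both discount factors commonly known, so P_i(K_j | ω) ∈ {0,1} for all ω), the pair (K_1, K_2) is a pair of cooperation events if and only if K_1 = K_2 ⊆ Λ, where Λ := {ω : λ_1(ω) ≥ 1/3 and λ_2(ω) ≥ 1/3}. -/
open Classical

/-- The cooperation threshold `f(l) = (1-l)/(2l)`. -/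
noncomputable def fThresh (l : ℝ) : ℝ := (1 - l) / (2 * l)

/-- `(K₁, K₂)` is a pair of cooperation events: each `K_i` is contained in
`{λ_i ≥ 1/3}`, each player `f_i`-believes in `K_j` on `K_i`, and assigns probability
at most `f_i` to `K_j` off `K_i`. -/
def IsCoopPair {Ω : Type*} (lam1 lam2 : Ω → ℝ) (P1 P2 : Ω → Set Ω → ℝ)
    (K1 K2 : Set Ω) : Prop :=
  K1 ⊆ {ω | 1/3 ≤ lam1 ω} ∧ K2 ⊆ {ω | 1/3 ≤ lam2 ω} ∧
  (∀ ω ∈ K1, fThresh (lam1 ω) ≤ P1 ω K2) ∧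
  (∀ ω ∈ K2, fThresh (lam2 ω) ≤ P2 ω K1) ∧
  (∀ ω ∉ K1, P1 ω K2 ≤ fThresh (lam1 ω)) ∧
  (∀ ω ∉ K2, P2 ω K1 ≤ fThresh (lam2 ω))

/-- In the complete-information repeated Prisoner's Dilemma (each player knows whether
the other cooperates, so `P_i(K_j | ω)` is `1` on `K_j` and `0` off `K_j`),
`(K₁, K₂)` is a pair of cooperation events iff `K₁ = K₂ ⊆ Λ`, where
`Λ = {ω : λ₁(ω) ≥ 1/3 ∧ λ₂(ω) ≥ 1/3}`. -/
theorem complete_information_cooperation {Ω : Type*}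
    (lam1 lam2 : Ω → ℝ)
    (hlam1 : ∀ ω, lam1 ω ∈ Set.Ioo (0:ℝ) 1) (hlam2 : ∀ ω, lam2 ω ∈ Set.Ioo (0:ℝ) 1)
    (P1 P2 : Ω → Set Ω → ℝ) (K1 K2 : Set Ω)
    (hP1 : ∀ ω, P1 ω K2 = if ω ∈ K2 then 1 else 0)
    (hP2 : ∀ ω, P2 ω K1 = if ω ∈ K1 then 1 else 0) :
    IsCoopPair lam1 lam2 P1 P2 K1 K2 ↔
      (K1 = K2 ∧ K1 ⊆ {ω | 1/3 ≤ lam1 ω ∧ 1/3 ≤ lam2 ω}) := by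
  have fpos : ∀ l : ℝ, l ∈ Set.Ioo (0:ℝ) 1 → 0 < fThresh l := by
    intro l hl
    exact div_pos (by linarith [hl.2]) (by linarith [hl.1])
  have fle1 : ∀ l : ℝ, 0 < l → 1/3 ≤ l → fThresh l ≤ 1 := by
    intro l hl h3
    rw [fThresh, div_le_one (by linarith)]
    linarith
  constructor
  · rintro ⟨h1, h2, h3, h4, _, _⟩
    have hK12 : K1 ⊆ K2 := by
      intro ω hω
      by_contra hn
      have := h3 ω hω
      rw [hP1 ω, if_neg hn] at this
      exact absurd this (not_le.2 (fpos _ (hlam1 ω)))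
    have hK21 : K2 ⊆ K1 := by
      intro ω hω
      by_contra hn
      have := h4 ω hω
      rw [hP2 ω, if_neg hn] at this
      exact absurd this (not_le.2 (fpos _ (hlam2 ω)))
    have hEq : K1 = K2 := Set.Subset.antisymm hK12 hK21
    exact ⟨hEq, fun ω hω => ⟨h1 hω, h2 (hEq ▸ hω)⟩⟩
  · rintro ⟨hEq, hΛ⟩
    subst hEq
    refine ⟨fun ω hω => (hΛ hω).1, fun ω hω => (hΛ hω).2, ?_, ?_, ?_, ?_⟩
    · intro ω hω
      rw [hP1 ω, if_pos hω]
      exact fle1 _ (hlam1 ω).1 (hΛ hω).1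
    · intro ω hω
      rw [hP2 ω, if_pos hω]
      exact fle1 _ (hlam2 ω).1 (hΛ hω).2
    · intro ω hω
      rw [hP1 ω, if_neg hω]
      exact (fpos _ (hlam1 ω)).le
    · intro ω hω
      rw [hP2 ω, if_neg hω]
      exact (fpos _ (hlam2 ω)).le
end
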